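/- Let (M,π) be a Poisson manifold and B a closed 2-form on M. Then the bundle map Φ_B = Id + B^♯ ∘ π^♯ : T*M → T*M is an IM-2-form on the Lie algebroid (T*M)_π; that is, for all 1-forms α, β: (i) ⟨Φ_B(α), π^♯(β)⟩ = −⟨Φ_B(β), π^♯(α)⟩, and (ii) Φ_B([α,β]_π) = L_{π^♯α} Φ_B(β) − L_{π^♯β} Φ_B(α) + d⟨Φ_B(α), π^♯(β)⟩. -/

import Mathlib

/-!
Algebraic model of a smooth manifold `M`: `R` is its commutative `ℝ`-algebra of
smooth functions `C^∞(M)`, vector fields are derivations of `R` (with the usual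
Lie bracket of vector fields given by the commutator), `1`-forms are `R`-linear
functionals on vector fields, and `2`-forms are skew-symmetric `R`-bilinear
forms on vector fields.  Exterior derivatives, Lie derivatives and interior
products are given by the usual Cartan formulas.
-/

variable {R : Type*} [CommRing R] [Algebra ℝ R]

/-- Vector fields on `M`. -/
abbrev Vec (R : Type*) [CommRing R] [Algebra ℝ R] := Derivation ℝ R R

/-- `1`-forms on `M`. -/
abbrev Form1 (R : Type*) [CommRing R] [Algebra ℝ R] := Vec R →ₗ[R] R

/-- The Courant bracket `⟦(X,α),(Y,β)⟧ = ([X,Y], L_X β − i_Y dα)` on sections of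
`𝕋M = TM ⊕ T*M`, written out pointwise via the Cartan formulas
`(L_X β)(Z) = X(β(Z)) − β([X,Z])` and `dα(Y,Z) = Y(α(Z)) − Z(α(Y)) − α([Y,Z])`. -/
def Cour (p q : Vec R × (Vec R → R)) : Vec R × (Vec R → R) :=
  (⁅p.1, q.1⁆,
    fun Z => p.1 (q.2 Z) - q.2 ⁅p.1, Z⁆ -
      (q.1 (p.2 Z) - Z (p.2 q.1) - p.2 ⁅q.1, Z⁆))

/-- The exterior derivative of a `2`-form `B` (given via `B^♯ : X ↦ B(X,·)`),
evaluated on vector fields `X, Y, Z` by the Cartan formula. -/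
def dCartan (B : Vec R →ₗ[R] Form1 R) (X Y Z : Vec R) : R :=
  X (B Y Z) - Y (B X Z) + Z (B X Y) -
    B ⁅X, Y⁆ Z + B ⁅X, Z⁆ Y - B ⁅Y, Z⁆ X

/-- The differential of a function: `df(X) = X(f)`. -/
def dR (f : R) : Form1 R where
  toFun X := X f
  map_add' X Y := rfl
  map_smul' c X := rfl

lemma lie_smul' (f : R) (X Y : Vec R) : ⁅X, f • Y⁆ = f • ⁅X, Y⁆ + X f • Y := by
  ext g
  simp [Derivation.commutator_apply, Derivation.leibniz, smul_eq_mul]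

/-- The Lie derivative of a `1`-form: `(L_X β)(Y) = X(β(Y)) − β([X,Y])`. -/
def lieD (X : Vec R) (β : Form1 R) : Form1 R where
  toFun Y := X (β Y) - β ⁅X, Y⁆
  map_add' Y Z := by simp; ring
  map_smul' c Y := by
    simp [lie_smul', smul_eq_mul, Derivation.leibniz]
    ring

/-- The Koszul bracket of `1`-forms on a Poisson manifold:
`[α,β]_π = L_{π^♯α} β − L_{π^♯β} α − d(π(α,β))`, where `π(α,β) = β(π^♯ α)`. -/
def brP (p : Form1 R →ₗ[R] Vec R) (α β : Form1 R) : Form1 R :=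
  lieD (p α) β - lieD (p β) α - dR (β (p α))

/-- The bracket `{f,g} = π(df,dg)` of functions induced by the bivector. -/
def poissonBr (p : Form1 R →ₗ[R] Vec R) (f g : R) : R := p (dR f) g

/-!
`Φ_B = Id + B^♯ ∘ π^♯` splits into two IM-2-forms. The identity is one because the Koszul
bracket is `L_{π^♯α} β − L_{π^♯β} α + d⟨α, π^♯β⟩` by skew-symmetry of `π`. The term `B^♯ ∘ π^♯`
is one because `π^♯` maps the Koszul bracket to the Lie bracket of vector fields (the Jacobi
identity) and, for closed `B`, `i_{[X,Y]} B = L_X i_Y B − L_Y i_X B + d(B(X,Y))`.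
-/

@[simp] lemma dR_apply (f : R) (X : Vec R) : dR f X = X f := rfl

@[simp] lemma lieD_apply (X : Vec R) (β : Form1 R) (Y : Vec R) :
    lieD X β Y = X (β Y) - β ⁅X, Y⁆ := rfl

lemma dR_add (f g : R) : dR (f + g) = dR f + dR g := by
  ext X
  simp

lemma lieD_add (X : Vec R) (β γ : Form1 R) : lieD X (β + γ) = lieD X β + lieD X γ := by
  ext Y
  simp only [lieD_apply, LinearMap.add_apply, map_add]
  ring

/-- Cartan's `i_{[X,Y]} = [L_X, i_Y]` applied to a closed `2`-form. -/
lemma interior_lie_of_closed (B : Vec R →ₗ[R] Form1 R) (hB : ∀ X Y : Vec R, B X Y = - B Y X)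
    (hdB : ∀ X Y Z : Vec R, dCartan B X Y Z = 0) (X Y : Vec R) :
    B ⁅X, Y⁆ = lieD X (B Y) - lieD Y (B X) + dR (B X Y) := by
  ext Z
  have hd := hdB X Y Z
  rw [dCartan, hB ⁅X, Z⁆ Y, hB ⁅Y, Z⁆ X] at hd
  simp only [LinearMap.add_apply, LinearMap.sub_apply, lieD_apply, dR_apply]
  linear_combination -hd

section Poisson

variable (p : Form1 R →ₗ[R] Vec R) (hp : ∀ α β : Form1 R, β (p α) = - α (p β))
include hp

lemma brP_eq_of_skew (α β : Form1 R) :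
    brP p α β = lieD (p α) β - lieD (p β) α + dR (α (p β)) := by
  rw [brP, hp α β]
  ext X
  simp

variable (hJac : ∀ f g h : R,
  poissonBr p f (poissonBr p g h) + poissonBr p g (poissonBr p h f) +
    poissonBr p h (poissonBr p f g) = 0)
include hJac

lemma anchor_dR_poissonBr (f g : R) :
    p (dR (poissonBr p f g)) = ⁅p (dR f), p (dR g)⁆ := by
  ext h
  have hJ := hJac f g h
  have e1 : p (dR (poissonBr p f g)) h = - poissonBr p h (poissonBr p f g) := hp _ (dR h)
  have e2 : poissonBr p h f = - poissonBr p f h := hp (dR h) (dR f)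
  rw [e2] at hJ
  simp only [poissonBr, map_neg] at hJ e1 ⊢
  rw [e1, Derivation.commutator_apply]
  linear_combination -hJ

lemma lie_hamiltonian_anchor (f : R) (α : Form1 R) :
    ⁅p (dR f), p α⁆ = p (lieD (p (dR f)) α) := by
  ext g
  have h1 : p α g = - α (p (dR g)) := hp α (dR g)
  have h2 : p (lieD (p (dR f)) α) g = - lieD (p (dR f)) α (p (dR g)) := hp _ (dR g)
  have h3 : p α (p (dR f) g) = - α (p (dR (poissonBr p f g))) := hp α (dR _)
  rw [Derivation.commutator_apply, h1, h2, h3, anchor_dR_poissonBr p hp hJac, lieD_apply,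
    map_neg]
  ring

lemma apply_lie_hamiltonian (g : R) (α β : Form1 R) :
    β ⁅p α, p (dR g)⁆ = lieD (p (dR g)) α (p β) := by
  rw [← lie_skew, map_neg, lie_hamiltonian_anchor p hp hJac, hp _ β, neg_neg]

lemma anchor_brP (α β : Form1 R) : p (brP p α β) = ⁅p α, p β⁆ := by
  ext g
  have hbr : p (brP p α β) g = - brP p α β (p (dR g)) := hp _ (dR g)
  have hβ : p β g = - β (p (dR g)) := hp β (dR g)
  have hα : p α g = - α (p (dR g)) := hp α (dR g)
  have hlie := apply_lie_hamiltonian p hp hJac g β α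
  have hskew : β ⁅p (dR g), p α⁆ = - β ⁅p α, p (dR g)⁆ := by rw [← lie_skew, map_neg]
  rw [Derivation.commutator_apply, hbr, hβ, hα, brP_eq_of_skew p hp]
  simp only [LinearMap.add_apply, LinearMap.sub_apply, lieD_apply, dR_apply, map_neg] at hlie ⊢
  rw [hp α β, map_neg] at hlie
  linear_combination hskew - hlie

end Poisson

/-- Let `(M,π)` be a Poisson manifold and `B` a closed `2`-form on `M`.  Then
the bundle map `Φ_B = Id + B^♯ ∘ π^♯ : T*M → T*M`, `Φ_B(α) = α + i_{π^♯α} B`,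
is an IM-`2`-form on the cotangent Lie algebroid `(T*M)_π`: for all `1`-forms
`α, β`,
(i)  `⟨Φ_B(α), π^♯(β)⟩ = −⟨Φ_B(β), π^♯(α)⟩`, and
(ii) `Φ_B([α,β]_π) = L_{π^♯α} Φ_B(β) − L_{π^♯β} Φ_B(α) + d⟨Φ_B(α), π^♯(β)⟩`. -/
theorem PhiB_is_IM_two_form
    (p : Form1 R →ₗ[R] Vec R)
    (hp : ∀ α β : Form1 R, β (p α) = - α (p β))
    (hJac : ∀ f g h : R,
      poissonBr p f (poissonBr p g h) + poissonBr p g (poissonBr p h f) +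
        poissonBr p h (poissonBr p f g) = 0)
    (B : Vec R →ₗ[R] Form1 R) (hB : ∀ X Y : Vec R, B X Y = - B Y X)
    (hdB : ∀ X Y Z : Vec R, dCartan B X Y Z = 0) :
    (∀ α β : Form1 R, (α + B (p α)) (p β) = - ((β + B (p β)) (p α))) ∧
    (∀ α β : Form1 R,
        brP p α β + B (p (brP p α β)) =
          lieD (p α) (β + B (p β)) - lieD (p β) (α + B (p α)) +
            dR ((α + B (p α)) (p β))) := by
  refine ⟨fun α β => ?_, fun α β => ?_⟩
  · rw [LinearMap.add_apply, LinearMap.add_apply, hp α β, hB (p β) (p α)]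
    ring
  · rw [anchor_brP p hp hJac, interior_lie_of_closed B hB hdB, brP_eq_of_skew p hp,
      lieD_add, lieD_add, LinearMap.add_apply, dR_add]
    abel
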